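/- Let T be a tree, let w : V(T) → ℕ with w(V(T)) > 0, let ∂W be a positive integer, let W* = cs(T,w), and let L = {u ∈ V(T) : w(u) > ∂W}. Suppose there is no connected set S of vertices of T such that W* + ∂W ≤ w(S) ≤ W* + 2∂W and w(D) ≤ W* for every connected component D of T − S. Then for every nonempty connected w-safe set S* with w(S*) = W*, the connected component T* of T − (L ∖ S*) that contains S* satisfies w(T*) < W* + ∂W, and V(T*) is a nonempty connected w-safe set in T. -/

import Mathlib

/-- Total weight of a set of vertices. -/
noncomputable def setWeight {V : Type*} (w : V → ℕ) (A : Set V) : ℕ := ∑ᶠ u ∈ A, w u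

/-- `C` is the vertex set of a connected component of the subgraph of `G` induced by `S`. -/
def IsCompOf {V : Type*} (G : SimpleGraph V) (S C : Set V) : Prop :=
  C ⊆ S ∧ (G.induce C).Connected ∧ ∀ u ∈ C, ∀ v ∈ S, G.Adj u v → v ∈ C

/-- `S` is a (nonempty) `w`-safe set of `G`. -/
def IsSafeSet {V : Type*} (G : SimpleGraph V) (w : V → ℕ) (S : Set V) : Prop :=
  S.Nonempty ∧ ∀ C D : Set V, IsCompOf G S C → IsCompOf G Sᶜ D →
    (∃ u ∈ C, ∃ v ∈ D, G.Adj u v) → setWeight w D ≤ setWeight w C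

/-- The connected safe number `cs(G,w)`. -/
noncomputable def connSafeNum {V : Type*} (G : SimpleGraph V) (w : V → ℕ) : ℕ :=
  sInf {m | ∃ S : Set V, IsSafeSet G w S ∧ (G.induce S).Connected ∧ setWeight w S = m}

/-!
Every vertex of `T*` outside `S*` has weight at most `∂W`. If `w(T*) ≥ W* + ∂W`, grow `S*` inside
`T*` one such vertex at a time, keeping it connected, until its weight first reaches `W* + ∂W`;
it is then still below `W* + 2∂W`. A component of the complement of any connected superset of
`S*` lies in a component of `T − S*` adjacent to `S*`, so safety of `S*` bounds its weight by `W*`,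
and the grown set contradicts the hypothesis. The same bound makes `T*` safe.
-/

open SimpleGraph Set

section Weight

variable {V : Type*} (w : V → ℕ) {A B : Set V}

lemma setWeight_mono (hB : B.Finite) (h : A ⊆ B) : setWeight w A ≤ setWeight w B := by
  unfold setWeight
  rw [← union_sdiff_cancel h, finsum_mem_union disjoint_sdiff_right (hB.subset h) hB.sdiff]
  exact Nat.le_add_right _ _

lemma setWeight_insert_le (hA : A.Finite) (a : V) :
    setWeight w (insert a A) ≤ setWeight w A + w a := by
  by_cases ha : a ∈ A
  · rw [insert_eq_of_mem ha]
    exact Nat.le_add_right _ _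
  · rw [setWeight, finsum_mem_insert _ ha hA, add_comm]
    rfl

end Weight

section Components

variable {V : Type*} {G : SimpleGraph V}

lemma SimpleGraph.Connected.exists_adj_of_mem_of_notMem (hG : G.Connected) {X : Set V}
    {x y : V} (hx : x ∈ X) (hy : y ∉ X) : ∃ a ∈ X, ∃ b ∉ X, G.Adj a b := by
  obtain ⟨p⟩ := hG.preconnected x y
  obtain ⟨d, -, ha, hb⟩ := p.exists_boundary_dart X hx hy
  exact ⟨d.fst, ha, d.snd, hb, d.adj⟩

lemma exists_adj_of_induce_connected {T X : Set V} (hT : (G.induce T).Connected) {x y : V}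
    (hxT : x ∈ T) (hx : x ∈ X) (hyT : y ∈ T) (hy : y ∉ X) :
    ∃ a ∈ T, a ∈ X ∧ ∃ b ∈ T, b ∉ X ∧ G.Adj a b := by
  obtain ⟨⟨a, haT⟩, ha, ⟨b, hbT⟩, hb, hab⟩ :=
    hT.exists_adj_of_mem_of_notMem (X := {v : T | (v : V) ∈ X}) (x := ⟨x, hxT⟩) (y := ⟨y, hyT⟩)
      hx hy
  exact ⟨a, haT, ha, b, hbT, hb, hab⟩

lemma connected_induce_insert_of_adj {R : Set V} {a b : V} (hR : (G.induce R).Connected)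
    (hb : b ∈ R) (hba : G.Adj b a) : (G.induce (insert a R)).Connected := by
  rw [← union_singleton]
  exact connected_induce_union hR.preconnected Connected.of_subsingleton.preconnected hb rfl hba

lemma isCompOf_self {S : Set V} (hS : (G.induce S).Connected) : IsCompOf G S S :=
  ⟨subset_rfl, hS, fun _ _ _ hv _ => hv⟩

lemma IsCompOf.nonempty {A C : Set V} (hC : IsCompOf G A C) : C.Nonempty :=
  nonempty_coe_sort.1 hC.2.1.nonempty

lemma IsCompOf.eq_of_connected {A C : Set V} (hC : IsCompOf G A C)
    (hA : (G.induce A).Connected) : C = A := by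
  refine hC.1.antisymm fun v hv => ?_
  by_contra hvC
  obtain ⟨c, hc⟩ := hC.nonempty
  obtain ⟨a, -, haC, b, hbA, hbC, hab⟩ := exists_adj_of_induce_connected hA (hC.1 hc) hc hv hvC
  exact hbC (hC.2.2 a haC b hbA hab)

def componentIn (G : SimpleGraph V) (B : Set V) (d : V) : Set V :=
  {v | ∃ s ⊆ B, d ∈ s ∧ v ∈ s ∧ (G.induce s).Connected}

variable {B : Set V} {d : V}

lemma subset_componentIn_of_connected {s : Set V} (hsB : s ⊆ B) (hs : (G.induce s).Connected)
    (hd : d ∈ s) : s ⊆ componentIn G B d :=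
  fun _ hv => ⟨s, hsB, hd, hv, hs⟩

lemma mem_componentIn_self (hd : d ∈ B) : d ∈ componentIn G B d :=
  subset_componentIn_of_connected (singleton_subset_iff.2 hd) Connected.of_subsingleton rfl rfl

lemma isCompOf_componentIn (hd : d ∈ B) : IsCompOf G B (componentIn G B d) := by
  refine ⟨fun v ⟨s, hsB, _, hv, _⟩ => hsB hv, ?_, ?_⟩
  · exact induce_connected_of_patches d (mem_componentIn_self hd)
      fun ⟨s, hsB, hds, hvs, hs⟩ =>
        ⟨s, subset_componentIn_of_connected hsB hs hds, hds, hvs, hs.preconnected _ _⟩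
  · rintro u ⟨s, hsB, hds, hus, hs⟩ v hvB huv
    exact ⟨insert v s, insert_subset hvB hsB, mem_insert_of_mem v hds, mem_insert v s,
      connected_induce_insert_of_adj hs hus huv⟩

lemma IsCompOf.subset_componentIn {A C : Set V} (hC : IsCompOf G A C) (hAB : A ⊆ B)
    (hd : d ∈ C) : C ⊆ componentIn G B d :=
  subset_componentIn_of_connected (hC.1.trans hAB) hC.2.1 hd

end Components

section Safe

variable {V : Type*} [Finite V] {G : SimpleGraph V} {w : V → ℕ} {S : Set V}

/-- A component `D` of `V ∖ A` lies in a component of `V ∖ S`, which is adjacent to `S`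
because `G` is connected. -/
lemma IsSafeSet.setWeight_le_of_isCompOf_compl (hG : G.Connected) (hS : IsSafeSet G w S)
    (hSc : (G.induce S).Connected) {A D : Set V} (hSA : S ⊆ A) (hD : IsCompOf G Aᶜ D) :
    setWeight w D ≤ setWeight w S := by
  obtain ⟨d, hd⟩ := hD.nonempty
  have hdS : d ∈ Sᶜ := fun h => hD.1 hd (hSA h)
  have hD' := isCompOf_componentIn (G := G) hdS
  obtain ⟨s, hs⟩ := hS.1
  obtain ⟨a, haD', b, hbD', hab⟩ :=
    hG.exists_adj_of_mem_of_notMem (mem_componentIn_self hdS) fun h => hD'.1 h hs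
  have hbS : b ∈ S := by
    by_contra hb
    exact hbD' (hD'.2.2 a haD' b hb hab)
  calc setWeight w D ≤ setWeight w (componentIn G Sᶜ d) :=
        setWeight_mono w (toFinite _) (hD.subset_componentIn (compl_subset_compl.2 hSA) hd)
    _ ≤ setWeight w S := hS.2 S _ (isCompOf_self hSc) hD' ⟨b, hbS, a, haD', hab.symm⟩

lemma IsSafeSet.of_subset_of_connected (hG : G.Connected) (hS : IsSafeSet G w S)
    (hSc : (G.induce S).Connected) {T : Set V} (hST : S ⊆ T) (hTc : (G.induce T).Connected) :
    IsSafeSet G w T := by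
  refine ⟨hS.1.mono hST, fun C D hC hD _ => ?_⟩
  rw [hC.eq_of_connected hTc]
  exact (hS.setWeight_le_of_isCompOf_compl hG hSc hST hD).trans
    (setWeight_mono w (toFinite T) hST)

end Safe

/-- Take a maximal connected `R` with `S ⊆ R ⊆ T` and `w(R) < m`, and add one vertex of `T`
adjacent to it. -/
lemma exists_connected_between_of_light {V : Type*} {G : SimpleGraph V} (w : V → ℕ)
    {S T : Set V} {m d : ℕ} (hTfin : T.Finite) (hT : (G.induce T).Connected)
    (hS : (G.induce S).Connected) (hST : S ⊆ T) (hlight : ∀ v ∈ T \ S, w v ≤ d)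
    (hSm : setWeight w S < m) (hmT : m ≤ setWeight w T) :
    ∃ R, S ⊆ R ∧ R ⊆ T ∧ (G.induce R).Connected ∧ m ≤ setWeight w R ∧ setWeight w R < m + d := by
  set P := {R : Set V | S ⊆ R ∧ R ⊆ T ∧ (G.induce R).Connected ∧ setWeight w R < m}
  have hPfin : P.Finite := hTfin.finite_subsets.subset fun R hR => hR.2.1
  obtain ⟨R, ⟨hSR, hRT, hR, hRm⟩, hmax⟩ := hPfin.exists_maximal ⟨S, subset_rfl, hST, hS, hSm⟩
  obtain ⟨t, htT, htR⟩ : ∃ t ∈ T, t ∉ R := by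
    by_contra! h
    have := setWeight_mono w (hTfin.subset hRT) h
    omega
  obtain ⟨s, hs⟩ := hS.nonempty
  obtain ⟨b, -, hbR, a, haT, haR, hba⟩ :=
    exists_adj_of_induce_connected hT (hRT (hSR hs)) (hSR hs) htT htR
  have hwa : setWeight w (insert a R) ≤ setWeight w R + d :=
    (setWeight_insert_le w (hTfin.subset hRT) a).trans
      (Nat.add_le_add_left (hlight a ⟨haT, fun h => haR (hSR h)⟩) _)
  have hR' := connected_induce_insert_of_adj hR hbR hba
  refine ⟨insert a R, hSR.trans (subset_insert a R), insert_subset haT hRT, hR', ?_, by omega⟩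
  by_contra! ham
  exact haR (hmax ⟨hSR.trans (subset_insert a R), insert_subset haT hRT, hR', ham⟩
    (subset_insert a R) (mem_insert a R))

theorem case1_component_is_safe_general {V : Type*} [Fintype V] (G : SimpleGraph V) (hT : G.IsTree)
    (w : V → ℕ) (dW : ℕ) (hdW : 0 < dW)
    (Wstar : ℕ) (L : Set V) (hL : L = {u | dW < w u})
    (hno : ¬ ∃ S : Set V, (G.induce S).Connected ∧
        Wstar + dW ≤ setWeight w S ∧ setWeight w S ≤ Wstar + 2 * dW ∧
        ∀ D : Set V, IsCompOf G Sᶜ D → setWeight w D ≤ Wstar)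
    (Sstar : Set V) (hsafe : IsSafeSet G w Sstar) (hconn : (G.induce Sstar).Connected)
    (hwS : setWeight w Sstar = Wstar)
    (Tstar : Set V) (hTstar : IsCompOf G (L \ Sstar)ᶜ Tstar) (hsub : Sstar ⊆ Tstar) :
    setWeight w Tstar < Wstar + dW ∧ IsSafeSet G w Tstar ∧ (G.induce Tstar).Connected := by
  subst hL
  have hG : G.Connected := hT.connected
  have hTconn : (G.induce Tstar).Connected := hTstar.2.1
  have hlight : ∀ v ∈ Tstar \ Sstar, w v ≤ dW :=
    fun v ⟨hvT, hvS⟩ => not_lt.1 fun hv => hTstar.1 hvT ⟨hv, hvS⟩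
  have hbound : setWeight w Tstar < Wstar + dW := by
    by_contra! hbig
    obtain ⟨R, hSR, -, hR, hlo, hhi⟩ := exists_connected_between_of_light w (m := Wstar + dW)
      (toFinite Tstar) hTconn hconn hsub hlight (by omega) hbig
    exact hno ⟨R, hR, hlo, by omega,
      fun D hD => hwS ▸ hsafe.setWeight_le_of_isCompOf_compl hG hconn hSR hD⟩
  exact ⟨hbound, hsafe.of_subset_of_connected hG hconn hsub hTconn, hTconn⟩

theorem case1_component_is_safe {V : Type*} [Fintype V] (G : SimpleGraph V) (hT : G.IsTree)
    (w : V → ℕ) (hw : 0 < setWeight w Set.univ) (dW : ℕ) (hdW : 0 < dW)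
    (Wstar : ℕ) (hWstar : Wstar = connSafeNum G w)
    (L : Set V) (hL : L = {u | dW < w u})
    (hno : ¬ ∃ S : Set V, (G.induce S).Connected ∧
        Wstar + dW ≤ setWeight w S ∧ setWeight w S ≤ Wstar + 2 * dW ∧
        ∀ D : Set V, IsCompOf G Sᶜ D → setWeight w D ≤ Wstar)
    (Sstar : Set V) (hsafe : IsSafeSet G w Sstar) (hconn : (G.induce Sstar).Connected)
    (hwS : setWeight w Sstar = Wstar)
    (Tstar : Set V) (hTstar : IsCompOf G (L \ Sstar)ᶜ Tstar) (hsub : Sstar ⊆ Tstar) :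
    setWeight w Tstar < Wstar + dW ∧ IsSafeSet G w Tstar ∧ (G.induce Tstar).Connected :=
  case1_component_is_safe_general G hT w dW hdW Wstar L hL hno Sstar hsafe hconn hwS Tstar hTstar
    hsub
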